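/- Let a, k ∈ ℕ and let P be a nonzero polynomial with nonnegative integer coefficients, no constant term, and degree at least 2. Then q^{−Σ_{j=1}^a P(j)} · 𝒞_{a,k}(P;q) = ∏_{n≥1} 1/(1−q^n)^k + O(q^{a+1}); that is, for every integer 0 ≤ m ≤ a, the coefficient of q^{m + Σ_{j=1}^a P(j)} in 𝒞_{a,k}(P;q) equals the coefficient of q^m in ∏_{n≥1} (1−q^n)^{−k}. -/

import Mathlib

open PowerSeries Finset
open scoped Classical

noncomputable section

/-- `(1 - q^n)^(-k)` in `ℚ⟦q⟧`, for `k : ℤ` (for negative `k` this is the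
power `(1 - q^n)^{|k|}`). -/
def dFac (n : ℕ) (k : ℤ) : PowerSeries ℚ :=
  if 0 ≤ k then ((1 - (X : PowerSeries ℚ) ^ n)⁻¹) ^ k.toNat
  else (1 - (X : PowerSeries ℚ) ^ n) ^ (-k).toNat

/-- Strictly increasing `a`-tuples `1 ≤ n₁ < n₂ < ⋯ < n_a ≤ N`. -/
def strictTuples (a N : ℕ) : Finset (Fin a → ℕ) :=
  (Fintype.piFinset fun _ : Fin a => Finset.Icc 1 N).filter fun f => StrictMono f

/-- The coefficient of `q^N` in
`𝒞_{a,k}(P; q) = Σ_{1≤n₁<⋯<n_a} q^{P(n₁)+⋯+P(n_a)} / ∏_j (1-q^{n_j})^k`, where `P` is a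
nonzero polynomial with coefficients in `ℕ₀` and `P(0) = 0`.  Such a `P` satisfies
`P(n) ≥ n` for `n ≥ 1`, so tuples containing an entry `> N` contribute `0` to the
coefficient of `q^N` and the (q-adically convergent) infinite sum may be truncated. -/
def Ccoeff (a k : ℕ) (P : Polynomial ℕ) (N : ℕ) : ℚ :=
  ∑ f ∈ strictTuples a N,
    PowerSeries.coeff N
      ((X : PowerSeries ℚ) ^ (∑ j, P.eval (f j)) * ∏ j, dFac (f j) (k : ℤ))

/-!
The tuple `(1, 2, …, a)` contributes `q^S ∏_{n ≤ a} (1 - qⁿ)^{-k}` with `S = Σ_{j ≤ a} P(j)`, and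
the factors with `n > m` are `≡ 1 mod q^{m+1}`. Every other strictly increasing tuple of positive
integers dominates `(1, 2, …, a)` entrywise and has last entry `≥ a + 1`; since `deg P ≥ 2` gives
`P(a + 1) > P(a) + a`, its exponent `Σ P(n_j)` exceeds `S + a ≥ S + m`, so it does not reach the
coefficient of `q^{S+m}`.
-/

lemma Nat.pow_add_lt_add_one_pow {n d : ℕ} (hd : 2 ≤ d) : n ^ d + n < (n + 1) ^ d := by
  obtain ⟨e, rfl⟩ : ∃ e, d = e + 2 := ⟨d - 2, by omega⟩
  have hpow : n ^ (e + 1) ≤ (n + 1) ^ (e + 1) := Nat.pow_le_pow_left n.le_succ _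
  have hself : n + 1 ≤ (n + 1) ^ (e + 1) := Nat.le_self_pow (by omega) _
  calc n ^ (e + 2) + n < n ^ (e + 1) * n + (n + 1) := by rw [pow_succ]; omega
    _ ≤ (n + 1) ^ (e + 1) * n + (n + 1) ^ (e + 1) := add_le_add (Nat.mul_le_mul_right _ hpow) hself
    _ = (n + 1) ^ (e + 2) := by ring

namespace Polynomial

lemma monotone_eval_nat (P : ℕ[X]) : Monotone fun n : ℕ => P.eval n := by
  intro x y h
  simp only [eval_eq_sum_range]
  exact Finset.sum_le_sum fun i _ => Nat.mul_le_mul_left _ (Nat.pow_le_pow_left h i)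

lemma eval_add_lt_eval_succ {P : ℕ[X]} (hdeg : 2 ≤ P.natDegree) (n : ℕ) :
    P.eval n + n < P.eval (n + 1) := by
  have hlead : 1 ≤ P.coeff P.natDegree :=
    Nat.one_le_iff_ne_zero.mpr (leadingCoeff_ne_zero.mpr (ne_zero_of_natDegree_gt hdeg))
  have hlow : ∑ i ∈ range P.natDegree, P.coeff i * n ^ i
      ≤ ∑ i ∈ range P.natDegree, P.coeff i * (n + 1) ^ i :=
    Finset.sum_le_sum fun i _ => Nat.mul_le_mul_left _ (Nat.pow_le_pow_left n.le_succ i)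
  have htop := Nat.pow_add_lt_add_one_pow (n := n) hdeg
  rw [eval_eq_sum_range, eval_eq_sum_range, sum_range_succ, sum_range_succ]
  nlinarith

end Polynomial

lemma dvd_prod_sub_one {ι α : Type*} [CommRing α] {d : α} {s : Finset ι} {f : ι → α}
    (h : ∀ i ∈ s, d ∣ f i - 1) : d ∣ ∏ i ∈ s, f i - 1 := by
  refine Finset.prod_induction f (fun x => d ∣ x - 1) (fun x y hx hy => ?_) (by simp) h
  rw [show x * y - 1 = x * (y - 1) + (x - 1) by ring]
  exact dvd_add (dvd_mul_of_dvd_right hy x) hx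

namespace PowerSeries

lemma coeff_mul_of_X_pow_dvd_sub_one {R : Type*} [CommRing R] {m : ℕ} (A : R⟦X⟧) {B : R⟦X⟧}
    (h : X ^ (m + 1) ∣ B - 1) : coeff m (A * B) = coeff m A := by
  obtain ⟨C, hC⟩ := h
  rw [show A * B = A + X ^ (m + 1) * (A * C) by linear_combination A * hC, map_add,
    coeff_X_pow_mul', if_neg (by omega), add_zero]

lemma X_pow_dvd_inv_one_sub_X_pow_sub_one {k : Type*} [Field k] {n : ℕ} (hn : n ≠ 0) :
    X ^ n ∣ (1 - X ^ n : k⟦X⟧)⁻¹ - 1 :=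
  ⟨(1 - X ^ n)⁻¹, by
    linear_combination PowerSeries.inv_mul_cancel (1 - X ^ n : k⟦X⟧) (by simp [hn])⟩

lemma coeff_prod_Icc_inv_one_sub_X_pow_pow {k : Type*} [Field k] (e : ℕ) {m a : ℕ}
    (hm : m ≤ a) :
    coeff m (∏ n ∈ Icc 1 a, ((1 - X ^ n : k⟦X⟧)⁻¹) ^ e) =
      coeff m (∏ n ∈ Icc 1 m, ((1 - X ^ n : k⟦X⟧)⁻¹) ^ e) := by
  have hIoc (b : ℕ) : Icc 1 b = Ioc 0 b := Finset.Icc_add_one_left_eq_Ioc 0 b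
  rw [hIoc, hIoc, ← Finset.prod_Ioc_consecutive _ (Nat.zero_le m) hm]
  refine coeff_mul_of_X_pow_dvd_sub_one _ (dvd_prod_sub_one fun n hn => ?_)
  have hmn : m + 1 ≤ n := (Finset.mem_Ioc.mp hn).1
  exact (pow_dvd_pow X hmn).trans <| (X_pow_dvd_inv_one_sub_X_pow_sub_one (by omega)).trans <|
    sub_one_dvd_pow_sub_one _ e

end PowerSeries

@[to_additive]
lemma Fin.prod_univ_eq_prod_Icc {M : Type*} [CommMonoid M] (f : ℕ → M) (n : ℕ) :
    ∏ j : Fin n, f (j + 1) = ∏ i ∈ Icc 1 n, f i := by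
  rw [Fin.prod_univ_eq_prod_range (fun i => f (i + 1)), range_eq_Ico, prod_Ico_add',
    zero_add, Ico_add_one_right_eq_Icc]

lemma dFac_natCast (n k : ℕ) : dFac n k = ((1 - X ^ n : PowerSeries ℚ)⁻¹) ^ k := by
  simp [dFac]

lemma StrictMono.monotone_sub_val {n : ℕ} {f : Fin n → ℕ} (hf : StrictMono f) :
    Monotone fun j => (f j : ℤ) - j := by
  cases n with
  | zero => exact fun i => i.elim0
  | succ n =>
    refine Fin.monotone_iff_le_succ.mpr fun i => ?_
    have : f i.castSucc < f i.succ := hf Fin.castSucc_lt_succ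
    simp only [Fin.val_castSucc, Fin.val_succ]
    omega

section strictTuples

variable {a N : ℕ} {f : Fin a → ℕ}

lemma mem_strictTuples : f ∈ strictTuples a N ↔ (∀ j, f j ∈ Icc 1 N) ∧ StrictMono f := by
  simp [strictTuples]

lemma succ_mem_strictTuples (h : a ≤ N) : (fun j : Fin a => (j : ℕ) + 1) ∈ strictTuples a N :=
  mem_strictTuples.mpr ⟨fun j => Finset.mem_Icc.mpr ⟨by omega, by omega⟩,
    fun _ _ hij => Nat.succ_lt_succ hij⟩

lemma succ_le_of_mem_strictTuples (hf : f ∈ strictTuples a N) (j : Fin a) : (j : ℕ) + 1 ≤ f j := by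
  obtain ⟨hIcc, hmono⟩ := mem_strictTuples.mp hf
  have h0 := (Finset.mem_Icc.mp (hIcc ⟨0, j.pos⟩)).1
  have hgap := hmono.monotone_sub_val (show ⟨0, j.pos⟩ ≤ j from Fin.mk_le_of_le_val (Nat.zero_le j))
  simp only at hgap
  omega

lemma exists_last_gt_of_mem_strictTuples (hf : f ∈ strictTuples a N)
    (hne : f ≠ fun j : Fin a => (j : ℕ) + 1) : ∃ ℓ : Fin a, (ℓ : ℕ) + 1 = a ∧ a + 1 ≤ f ℓ := by
  obtain ⟨j, hj⟩ := Function.ne_iff.mp hne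
  have := j.isLt
  refine ⟨⟨a - 1, by omega⟩, show a - 1 + 1 = a by omega, ?_⟩
  have hgap := (mem_strictTuples.mp hf).2.monotone_sub_val (show j ≤ ⟨a - 1, by omega⟩ from
    Fin.le_iff_val_le_val.mpr (show (j : ℕ) ≤ a - 1 by omega))
  have := succ_le_of_mem_strictTuples hf j
  simp only at hgap
  omega

lemma sum_eval_add_lt_of_mem_strictTuples {P : Polynomial ℕ} (hdeg : 2 ≤ P.natDegree)
    (hf : f ∈ strictTuples a N) (hne : f ≠ fun j : Fin a => (j : ℕ) + 1) :
    ∑ j : Fin a, P.eval ((j : ℕ) + 1) + a < ∑ j, P.eval (f j) := by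
  obtain ⟨ℓ, hℓ, hfℓ⟩ := exists_last_gt_of_mem_strictTuples hf hne
  have hrest : ∑ j ∈ univ.erase ℓ, P.eval ((j : ℕ) + 1) ≤ ∑ j ∈ univ.erase ℓ, P.eval (f j) :=
    Finset.sum_le_sum fun j _ => P.monotone_eval_nat (succ_le_of_mem_strictTuples hf j)
  have hlast : P.eval a + a < P.eval (f ℓ) :=
    (P.eval_add_lt_eval_succ hdeg a).trans_le (P.monotone_eval_nat hfℓ)
  rw [← Finset.add_sum_erase _ _ (mem_univ ℓ), ← Finset.add_sum_erase _ _ (mem_univ ℓ), hℓ]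
  omega

end strictTuples

theorem C_approximates_eta_power_general (a k : ℕ) (P : Polynomial ℕ) (hdeg : 2 ≤ P.natDegree)
    (m : ℕ) (hm : m ≤ a) :
    Ccoeff a k P (m + ∑ j ∈ Finset.Icc 1 a, P.eval j) =
      PowerSeries.coeff m
        (∏ n ∈ Finset.Icc 1 m, ((1 - (X : PowerSeries ℚ) ^ n)⁻¹) ^ k) := by
  set S := ∑ j ∈ Finset.Icc 1 a, P.eval j
  have hS_fin : S = ∑ j : Fin a, P.eval ((j : ℕ) + 1) := (Fin.sum_univ_eq_sum_Icc _ a).symm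
  have haS : a ≤ S := by
    simpa [hS_fin] using Finset.card_nsmul_le_sum univ (fun j : Fin a => P.eval ((j : ℕ) + 1)) 1
      fun j _ => (Nat.zero_le _).trans_lt (P.eval_add_lt_eval_succ hdeg j)
  rw [Ccoeff, Finset.sum_eq_single_of_mem _ (succ_mem_strictTuples (by omega)) fun f hf hne => ?_]
  · simp only [← hS_fin, dFac_natCast, coeff_X_pow_mul,
      Fin.prod_univ_eq_prod_Icc fun n => ((1 - (X : PowerSeries ℚ) ^ n)⁻¹) ^ k]
    exact coeff_prod_Icc_inv_one_sub_X_pow_pow k hm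
  · have := sum_eval_add_lt_of_mem_strictTuples hdeg hf hne
    rw [coeff_X_pow_mul', if_neg (by omega)]

/-- Section 5.1: the limiting behaviour of `𝒞_{a,k}(P;q)`.  Let
`a, k ∈ ℕ` (positive) and let `P` be a nonzero polynomial with coefficients in `ℕ₀`, with
no constant term and of degree at least `2`.  Then
`q^{-Σ_{j=1}^a P(j)} 𝒞_{a,k}(P;q) = ∏_{n≥1} (1-qⁿ)^{-k} + O(q^{a+1})`: for every
`0 ≤ m ≤ a`, the coefficient of `q^{m + Σ_{j=1}^a P(j)}` in `𝒞_{a,k}(P;q)` equals the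
coefficient of `q^m` in `∏_{n≥1} (1-qⁿ)^{-k}` (factors with `n > m` do not affect this
coefficient, so the infinite product may be truncated at `n = m`). -/
theorem C_approximates_eta_power (a k : ℕ) (ha : 1 ≤ a) (hk : 1 ≤ k)
    (P : Polynomial ℕ) (hP : P ≠ 0) (hP0 : P.coeff 0 = 0) (hdeg : 2 ≤ P.natDegree)
    (m : ℕ) (hm : m ≤ a) :
    Ccoeff a k P (m + ∑ j ∈ Finset.Icc 1 a, P.eval j) =
      PowerSeries.coeff m
        (∏ n ∈ Finset.Icc 1 m, ((1 - (X : PowerSeries ℚ) ^ n)⁻¹) ^ k) :=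
  C_approximates_eta_power_general a k P hdeg m hm
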